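/- Let n ≥ 2 and m = n − 2. Let f ∈ ℂ[[X,Y]] be a formal power series in two variables. In the ring ℂ[[x, a_0, …, a_m]], let g := f(x, Σ_{i=0}^m a_i x^i), write g = Σ_{i=0}^∞ f_i x^i with f_i ∈ ℂ[[a_0, …, a_m]], and set k_i := −f_i. Then there exists a formal power series W ∈ ℂ[[a_0, …, a_m]] (a superpotential) such that ∂W/∂a_i = k_{n−1−i} for all 0 ≤ i ≤ m; in particular the ideal of ℂ[[a_0, …, a_m]] generated by k_1, …, k_{n−1} equals the ideal generated by the partial derivatives ∂W/∂a_0, …, ∂W/∂a_m. -/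

import Mathlib

noncomputable section

/-- The formal partial derivative of a multivariate formal power series with respect to the
variable `j`, defined coefficientwise. -/
def MvPowerSeries.cpderiv {σ : Type*} (j : σ) (f : MvPowerSeries σ ℂ) :
    MvPowerSeries σ ℂ :=
  fun e => ((e j : ℂ) + 1) * MvPowerSeries.coeff (e + Finsupp.single j 1) f

/-- Substitution of two formal power series `s₀, s₁` (intended to have zero constant term) for
the variables of a two-variable formal power series `r`, given by the closed coefficient
formula: the coefficient at a monomial `e` is
`∑_{p,q} r_{p,q} · (coefficient of e in s₀^p · s₁^q)`, the sum being finite because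
`s₀^p · s₁^q` has no monomial of total degree `< p + q` when `s₀, s₁` have zero constant term. -/
def MvPowerSeries.subst2 {σ : Type*} (s₀ s₁ : MvPowerSeries σ ℂ)
    (r : MvPowerSeries (Fin 2) ℂ) : MvPowerSeries σ ℂ :=
  fun e =>
    ∑ p ∈ Finset.range (e.sum (fun _ n => n) + 1) ×ˢ
        Finset.range (e.sum (fun _ n => n) + 1),
      (MvPowerSeries.coeff (Finsupp.single 0 p.1 + Finsupp.single 1 p.2) r) *
        MvPowerSeries.coeff e (s₀ ^ p.1 * s₁ ^ p.2)

/-- Viewing a formal power series in the variables `x, a₀, …, a_m` (with `x` the variable of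
index `0` and `a_j` the variable of index `j+1`) as a power series in `x` with coefficients in
`ℂ[[a₀, …, a_m]]`, this is the coefficient of `x^i`. -/
def MvPowerSeries.xCoeff {m : ℕ} (i : ℕ) (f : MvPowerSeries (Fin (m + 2)) ℂ) :
    MvPowerSeries (Fin (m + 1)) ℂ :=
  fun d => MvPowerSeries.coeff (Finsupp.single 0 i + d.mapDomain Fin.succ) f

variable {m : ℕ}


lemma sumSingle_apply_zero (c : Fin (m + 1) → ℕ) :
    (∑ l : Fin (m + 1), Finsupp.single (l.succ : Fin (m + 2)) (c l)) 0 = 0 := by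
  rw [Finsupp.finset_sum_apply]
  exact Finset.sum_eq_zero fun l _ => by
    simp [Finsupp.single_apply, (Fin.succ_ne_zero l)]

lemma sumSingle_apply_succ (c : Fin (m + 1) → ℕ) (j : Fin (m + 1)) :
    (∑ l : Fin (m + 1), Finsupp.single (l.succ : Fin (m + 2)) (c l)) j.succ = c j := by
  rw [Finsupp.finset_sum_apply]
  simp [Finsupp.single_apply, Fin.succ_inj]

lemma mapDomain_succ_eq (e : Fin (m + 1) →₀ ℕ) :
    e.mapDomain (Fin.succ : Fin (m + 1) → Fin (m + 2)) =
      ∑ l : Fin (m + 1), Finsupp.single (l.succ : Fin (m + 2)) (e l) := by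
  rw [Finsupp.mapDomain]
  exact Finsupp.sum_fintype _ _ fun _ => Finsupp.single_zero _

lemma monomial_one_pow (u : Fin (m + 2) →₀ ℕ) (p : ℕ) :
    (MvPowerSeries.monomial u (1 : ℂ)) ^ p = MvPowerSeries.monomial (p • u) (1 : ℂ) := by
  induction p with
  | zero => simp [MvPowerSeries.monomial_zero_one]
  | succ p ih =>
      rw [pow_succ, ih, MvPowerSeries.monomial_mul_monomial, one_mul, succ_nsmul]

lemma prod_monomial_one (s : Finset (Fin (m + 1))) (v : Fin (m + 1) → (Fin (m + 2) →₀ ℕ)) :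
    (∏ l ∈ s, MvPowerSeries.monomial (v l) (1 : ℂ)) =
      MvPowerSeries.monomial (∑ l ∈ s, v l) 1 := by
  induction s using Finset.cons_induction with
  | empty => simp [MvPowerSeries.monomial_zero_one]
  | cons a s ha ih =>
      rw [Finset.prod_cons, ih, Finset.sum_cons, MvPowerSeries.monomial_mul_monomial, one_mul]

/-- exponent of the generic monomial in `x^p * S^q`. -/
lemma exp_eq_iff (p N : ℕ) (c : Fin (m + 1) → ℕ) (e : Fin (m + 1) →₀ ℕ) :
    (Finsupp.single (0 : Fin (m + 2)) (p + ∑ l : Fin (m + 1), (l : ℕ) * c l) +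
        ∑ l : Fin (m + 1), Finsupp.single (l.succ : Fin (m + 2)) (c l)) =
      Finsupp.single 0 N + e.mapDomain Fin.succ ↔
    (N = p + ∑ l : Fin (m + 1), (l : ℕ) * c l ∧ ∀ l, c l = e l) := by
  rw [mapDomain_succ_eq]
  constructor
  · intro h
    have h0 := congrFun (congrArg (fun v : Fin (m + 2) →₀ ℕ => (v : Fin (m + 2) → ℕ)) h) 0
    have hs := fun j : Fin (m + 1) =>
      congrFun (congrArg (fun v : Fin (m + 2) →₀ ℕ => (v : Fin (m + 2) → ℕ)) h) j.succ
    simp only [Finsupp.coe_add, Pi.add_apply] at h0 hs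
    rw [sumSingle_apply_zero, sumSingle_apply_zero] at h0
    constructor
    · simpa [Finsupp.single_apply] using h0.symm
    · intro j
      have := hs j
      rw [sumSingle_apply_succ, sumSingle_apply_succ] at this
      simpa [Finsupp.single_apply, (Fin.succ_ne_zero j).symm] using this
  · rintro ⟨h1, h2⟩
    rw [h1]
    congr 1
    exact Finset.sum_congr rfl fun l _ => by rw [h2 l]

lemma coeff_xpow_mul_Spow (p q N : ℕ) (e : Fin (m + 1) →₀ ℕ) :
    MvPowerSeries.coeff (Finsupp.single 0 N + e.mapDomain Fin.succ)
      ((MvPowerSeries.X (0 : Fin (m + 2)) : MvPowerSeries (Fin (m + 2)) ℂ) ^ p *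
        (∑ l : Fin (m + 1), MvPowerSeries.X l.succ * MvPowerSeries.X 0 ^ (l : ℕ)) ^ q) =
      if q = (∑ l : Fin (m + 1), e l) ∧ N = p + ∑ l : Fin (m + 1), (l : ℕ) * e l then
        (Nat.multinomial Finset.univ ⇑e : ℂ) else 0 := by
  have hS : ∀ l : Fin (m + 1),
      (MvPowerSeries.X l.succ * MvPowerSeries.X 0 ^ (l : ℕ) : MvPowerSeries (Fin (m + 2)) ℂ) =
        MvPowerSeries.monomial (Finsupp.single (l.succ : Fin (m + 2)) 1 +
          Finsupp.single 0 (l : ℕ)) 1 := fun l => by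
    rw [MvPowerSeries.X_def, MvPowerSeries.X_pow_eq, MvPowerSeries.monomial_mul_monomial, one_mul]
  simp_rw [hS]
  rw [Finset.sum_pow_eq_sum_piAntidiag]
  rw [Finset.mul_sum, map_sum]
  have hterm : ∀ c : Fin (m + 1) → ℕ,
      (MvPowerSeries.X (0 : Fin (m + 2)) : MvPowerSeries (Fin (m + 2)) ℂ) ^ p *
        ((Nat.multinomial Finset.univ c : MvPowerSeries (Fin (m + 2)) ℂ) *
          ∏ l : Fin (m + 1), (MvPowerSeries.monomial (Finsupp.single (l.succ : Fin (m + 2)) 1 +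
            Finsupp.single 0 (l : ℕ)) 1) ^ (c l)) =
      (Nat.multinomial Finset.univ c : ℕ) •
        MvPowerSeries.monomial (Finsupp.single (0 : Fin (m + 2))
            (p + ∑ l : Fin (m + 1), (l : ℕ) * c l) +
          ∑ l : Fin (m + 1), Finsupp.single (l.succ : Fin (m + 2)) (c l)) 1 := by
    intro c
    have : (∏ l : Fin (m + 1), (MvPowerSeries.monomial
        (Finsupp.single (l.succ : Fin (m + 2)) 1 + Finsupp.single 0 (l : ℕ)) (1 : ℂ)) ^ (c l)) =
        MvPowerSeries.monomial (∑ l : Fin (m + 1),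
          (Finsupp.single (l.succ : Fin (m + 2)) (c l) + Finsupp.single 0 ((l : ℕ) * c l))) (1 : ℂ) := by
      rw [← prod_monomial_one]
      refine Finset.prod_congr rfl fun l _ => ?_
      rw [monomial_one_pow]
      congr 1
      rw [smul_add, Finsupp.smul_single, Finsupp.smul_single, smul_eq_mul, smul_eq_mul,
        mul_one, mul_comm]
    rw [this, nsmul_eq_mul, mul_left_comm, MvPowerSeries.X_pow_eq,
      MvPowerSeries.monomial_mul_monomial, one_mul]
    congr 1
    rw [Finset.sum_add_distrib, ← Finsupp.single_finset_sum, Finsupp.single_add]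
    abel
  rw [Finset.sum_congr rfl (fun c _ => by rw [hterm c, map_nsmul, MvPowerSeries.coeff_monomial])]
  by_cases hcond : q = (∑ l : Fin (m + 1), e l) ∧ N = p + ∑ l : Fin (m + 1), (l : ℕ) * e l
  · rw [if_pos hcond]
    rw [Finset.sum_eq_single_of_mem (⇑e) ?_ ?_]
    · rw [if_pos (((exp_eq_iff p N ⇑e e).2 ⟨hcond.2, fun _ => rfl⟩)).symm]
      simp
    · rw [Finset.mem_piAntidiag]
      exact ⟨hcond.1.symm, fun i _ => Finset.mem_univ i⟩
    · intro c _ hc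
      rw [if_neg, smul_zero]
      intro hEq
      exact hc (funext ((exp_eq_iff p N c e).1 hEq.symm).2)
  · rw [if_neg hcond]
    refine Finset.sum_eq_zero fun c hc => ?_
    rw [Finset.mem_piAntidiag] at hc
    rw [if_neg, smul_zero]
    intro hEq
    obtain ⟨h1, h2⟩ := (exp_eq_iff p N c e).1 hEq.symm
    refine hcond ⟨?_, ?_⟩
    · rw [← hc.1]
      exact Finset.sum_congr rfl fun l _ => h2 l
    · rw [h1]
      refine congrArg _ (Finset.sum_congr rfl fun l _ => by rw [h2 l])

lemma E_apply_zero (N : ℕ) (e : Fin (m + 1) →₀ ℕ) :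
    (Finsupp.single (0 : Fin (m + 2)) N + e.mapDomain Fin.succ) 0 = N := by
  rw [Finsupp.add_apply, mapDomain_succ_eq, sumSingle_apply_zero, Finsupp.single_eq_same, add_zero]

lemma E_apply_succ (N : ℕ) (e : Fin (m + 1) →₀ ℕ) (j : Fin (m + 1)) :
    (Finsupp.single (0 : Fin (m + 2)) N + e.mapDomain Fin.succ) j.succ = e j := by
  rw [Finsupp.add_apply, mapDomain_succ_eq, sumSingle_apply_succ, Finsupp.single_apply,
    if_neg fun h => (Fin.succ_ne_zero j) h.symm, zero_add]

lemma E_sum_eq (N : ℕ) (e : Fin (m + 1) →₀ ℕ) :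
    (Finsupp.single (0 : Fin (m + 2)) N + e.mapDomain Fin.succ).sum (fun _ n => n) =
      N + ∑ l : Fin (m + 1), e l := by
  rw [Finsupp.sum_fintype _ _ fun _ => rfl, Fin.sum_univ_succ, E_apply_zero]
  exact congrArg _ (Finset.sum_congr rfl fun j _ => E_apply_succ N e j)

lemma coeff_subst2_eq (f : MvPowerSeries (Fin 2) ℂ) (N : ℕ) (e : Fin (m + 1) →₀ ℕ) :
    MvPowerSeries.coeff (Finsupp.single 0 N + e.mapDomain Fin.succ)
      (MvPowerSeries.subst2 (MvPowerSeries.X 0)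
        (∑ l : Fin (m + 1), MvPowerSeries.X l.succ * MvPowerSeries.X 0 ^ (l : ℕ)) f) =
      if (∑ l : Fin (m + 1), (l : ℕ) * e l) ≤ N then
        (Nat.multinomial Finset.univ ⇑e : ℂ) *
          MvPowerSeries.coeff (Finsupp.single 0 (N - ∑ l : Fin (m + 1), (l : ℕ) * e l) +
            Finsupp.single 1 (∑ l : Fin (m + 1), e l)) f
      else 0 := by
  rw [MvPowerSeries.coeff_apply, MvPowerSeries.subst2, E_sum_eq]
  set D := N + ∑ l : Fin (m + 1), e l with hD
  set w := ∑ l : Fin (m + 1), (l : ℕ) * e l with hw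
  have hcoeff : ∀ pq : ℕ × ℕ,
      MvPowerSeries.coeff (Finsupp.single 0 N + e.mapDomain Fin.succ)
        ((MvPowerSeries.X (0 : Fin (m + 2)) : MvPowerSeries (Fin (m + 2)) ℂ) ^ pq.1 *
          (∑ l : Fin (m + 1), MvPowerSeries.X l.succ * MvPowerSeries.X 0 ^ (l : ℕ)) ^ pq.2) =
      if pq.2 = (∑ l : Fin (m + 1), e l) ∧ N = pq.1 + w then
        (Nat.multinomial Finset.univ ⇑e : ℂ) else 0 := fun pq => coeff_xpow_mul_Spow _ _ _ _
  by_cases hle : w ≤ N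
  · rw [if_pos hle]
    rw [Finset.sum_eq_single_of_mem (N - w, ∑ l : Fin (m + 1), e l) ?_ ?_]
    · rw [hcoeff, if_pos ⟨rfl, by omega⟩, mul_comm]
    · rw [Finset.mem_product, Finset.mem_range, Finset.mem_range]
      constructor <;> omega
    · intro pq _ hpq
      rw [hcoeff, if_neg, mul_zero]
      rintro ⟨h1, h2⟩
      exact hpq (Prod.ext (by omega) h1)
  · rw [if_neg hle]
    refine Finset.sum_eq_zero fun pq _ => ?_
    rw [hcoeff, if_neg, mul_zero]
    rintro ⟨h1, h2⟩
    omega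

lemma sum_add_single (e : Fin (m + 1) →₀ ℕ) (j : Fin (m + 1)) :
    ∑ l : Fin (m + 1), (e + Finsupp.single j 1 : Fin (m + 1) →₀ ℕ) l = (∑ l : Fin (m + 1), e l) + 1 := by
  simp only [Finsupp.add_apply, Finset.sum_add_distrib, Finsupp.single_apply]
  rw [Finset.sum_ite_eq, if_pos (Finset.mem_univ j)]

lemma wsum_add_single (e : Fin (m + 1) →₀ ℕ) (j : Fin (m + 1)) :
    ∑ l : Fin (m + 1), (l : ℕ) * (e + Finsupp.single j 1 : Fin (m + 1) →₀ ℕ) l =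
      (∑ l : Fin (m + 1), (l : ℕ) * e l) + (j : ℕ) := by
  simp only [Finsupp.add_apply, mul_add, Finset.sum_add_distrib, Finsupp.single_apply, mul_ite,
    mul_one, mul_zero]
  rw [Finset.sum_ite_eq, if_pos (Finset.mem_univ j)]

lemma prod_factorial_add_single (e : Fin (m + 1) →₀ ℕ) (j : Fin (m + 1)) :
    ∏ l : Fin (m + 1), ((e + Finsupp.single j 1 : Fin (m + 1) →₀ ℕ) l).factorial =
      (e j + 1) * ∏ l : Fin (m + 1), (e l).factorial := by
  rw [← Finset.mul_prod_erase Finset.univ _ (Finset.mem_univ j),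
    ← Finset.mul_prod_erase Finset.univ (fun l => (e l).factorial) (Finset.mem_univ j)]
  have h1 : (e + Finsupp.single j 1 : Fin (m + 1) →₀ ℕ) j = e j + 1 := by
    rw [Finsupp.add_apply, Finsupp.single_eq_same]
  have h2 : ∀ l ∈ Finset.univ.erase j, (e + Finsupp.single j 1 : Fin (m + 1) →₀ ℕ) l = e l := fun l hl => by
    rw [Finsupp.add_apply, Finsupp.single_apply, if_neg (Finset.ne_of_mem_erase hl).symm,
      add_zero]
  rw [h1, Nat.factorial_succ, Finset.prod_congr rfl (fun l hl => by rw [h2 l hl]), mul_assoc]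

/-- Let `n ≥ 2`, `m = n − 2`, `f ∈ ℂ[[X,Y]]`.  In `ℂ[[x, a₀, …, a_m]]` let
`g := f(x, ∑_{i=0}^m a_i x^i)`, write `g = ∑ f_i x^i` with `f_i ∈ ℂ[[a₀, …, a_m]]`, and set
`k_i := −f_i`.  Then there is a superpotential `W ∈ ℂ[[a₀, …, a_m]]` with
`∂W/∂a_i = k_{n−1−i}` for all `0 ≤ i ≤ m`; in particular the ideal generated by
`k_1, …, k_{n−1}` equals the ideal generated by `∂W/∂a_0, …, ∂W/∂a_m`. -/
theorem exists_superpotential_formal (n m : ℕ) (hn : 2 ≤ n) (hm : m = n - 2)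
    (f : MvPowerSeries (Fin 2) ℂ)
    (g : MvPowerSeries (Fin (m + 2)) ℂ)
    (hg : g = MvPowerSeries.subst2 (MvPowerSeries.X 0)
      (∑ l : Fin (m + 1), MvPowerSeries.X l.succ * MvPowerSeries.X 0 ^ (l : ℕ)) f)
    (k : ℕ → MvPowerSeries (Fin (m + 1)) ℂ)
    (hk : ∀ i, k i = -(MvPowerSeries.xCoeff i g)) :
    ∃ W : MvPowerSeries (Fin (m + 1)) ℂ,
      (∀ i : Fin (m + 1), MvPowerSeries.cpderiv i W = k (n - 1 - (i : ℕ))) ∧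
      Ideal.span {p : MvPowerSeries (Fin (m + 1)) ℂ | ∃ i : ℕ, 1 ≤ i ∧ i ≤ n - 1 ∧ p = k i} =
        Ideal.span (Set.range fun i : Fin (m + 1) => MvPowerSeries.cpderiv i W) := by
  set W : MvPowerSeries (Fin (m + 1)) ℂ := fun d =>
    if (∑ l : Fin (m + 1), (l : ℕ) * d l) ≤ n - 1 then
      -((((∑ l : Fin (m + 1), d l) - 1).factorial : ℂ) /
          ((∏ l : Fin (m + 1), ((d l).factorial) : ℕ) : ℂ)) *
        MvPowerSeries.coeff
          (Finsupp.single 0 (n - 1 - ∑ l : Fin (m + 1), (l : ℕ) * d l) +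
            Finsupp.single 1 ((∑ l : Fin (m + 1), d l) - 1)) f
    else 0 with hW
  have key : ∀ i : Fin (m + 1), MvPowerSeries.cpderiv i W = k (n - 1 - (i : ℕ)) := by
    intro j
    funext e
    have hj : (j : ℕ) ≤ m := by have := j.isLt; omega
    show ((e j : ℂ) + 1) * MvPowerSeries.coeff (e + Finsupp.single j 1) W = _
    rw [hk]
    show _ = -(MvPowerSeries.coeff
      (Finsupp.single 0 (n - 1 - (j : ℕ)) + e.mapDomain Fin.succ) g)
    rw [hg, coeff_subst2_eq, MvPowerSeries.coeff_apply, hW]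
    simp only
    rw [sum_add_single, wsum_add_single, prod_factorial_add_single, Nat.add_sub_cancel]
    by_cases hle : (∑ l : Fin (m + 1), (l : ℕ) * e l) ≤ n - 1 - (j : ℕ)
    · rw [if_pos (by omega), if_pos hle]
      have hidx : n - 1 - ((∑ l : Fin (m + 1), (l : ℕ) * e l) + (j : ℕ)) =
          n - 1 - (j : ℕ) - (∑ l : Fin (m + 1), (l : ℕ) * e l) := by omega
      rw [hidx]
      set F := MvPowerSeries.coeff
        (Finsupp.single 0 (n - 1 - (j : ℕ) - ∑ l : Fin (m + 1), (l : ℕ) * e l) +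
          Finsupp.single 1 (∑ l : Fin (m + 1), e l)) f
      have hspec : ((∏ l : Fin (m + 1), ((e l).factorial) : ℕ) : ℂ) *
          (Nat.multinomial Finset.univ ⇑e : ℂ) = (((∑ l : Fin (m + 1), e l).factorial : ℕ) : ℂ) := by
        exact_mod_cast congrArg (Nat.cast : ℕ → ℂ) (Nat.multinomial_spec Finset.univ ⇑e)
      have h1 : ((e j : ℂ) + 1) ≠ 0 := by
        have : ((e j + 1 : ℕ) : ℂ) ≠ 0 := Nat.cast_ne_zero.2 (Nat.succ_ne_zero _)
        push_cast at this; exact this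
      have h2 : ((∏ l : Fin (m + 1), ((e l).factorial) : ℕ) : ℂ) ≠ 0 :=
        Nat.cast_ne_zero.2 (Finset.prod_ne_zero_iff.2 fun l _ => Nat.factorial_ne_zero _)
      have h3 : ((e j + 1 : ℕ) : ℂ) = (e j : ℂ) + 1 := by push_cast; ring
      have hkey : ∀ a P M S F : ℂ, a ≠ 0 → P ≠ 0 → P * M = S →
          a * (-(S / (a * P)) * F) = -(M * F) := by
        intro a P M S F ha hP h
        subst h
        field_simp
      rw [Nat.cast_mul, h3]
      exact hkey _ _ _ _ _ h1 h2 hspec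
    · rw [if_neg (by omega), if_neg hle, mul_zero, neg_zero]
  refine ⟨W, key, ?_⟩
  have hrange : (Set.range fun i : Fin (m + 1) => MvPowerSeries.cpderiv i W) =
      {p : MvPowerSeries (Fin (m + 1)) ℂ | ∃ i : ℕ, 1 ≤ i ∧ i ≤ n - 1 ∧ p = k i} := by
    ext p
    constructor
    · rintro ⟨j, rfl⟩
      have hj := j.isLt
      exact ⟨n - 1 - (j : ℕ), by omega, by omega, key j⟩
    · rintro ⟨i, h1, h2, rfl⟩
      refine ⟨⟨n - 1 - i, by omega⟩, ?_⟩
      have hji : n - 1 - (n - 1 - i) = i := by omega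
      simpa [hji] using key ⟨n - 1 - i, by omega⟩
  rw [hrange]
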